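/- There exist rational functions L_1, …, L_p : ℂ → ℂ (each finite at every point z with f'(z) ≠ 0) such that for all z, x ∈ ℂ with f'(z) ≠ 0, x ≠ f(z), and x ∉ {v_1, …, v_p}, one has Σ_{y ∈ ℂ : f(y) = x} 1/((z − y)·(f'(y))²) = 1/(f'(z)·(f(z) − x)) + Σ_{j=1}^p L_j(z)/(x − v_j). -/

import Mathlib

open MeasureTheory Filter Topology Set

noncomputable section

open Polynomial in
/-- `X - C c` is coprime to any polynomial not vanishing at `c`. -/
lemma lin_coprime {c : ℂ} {g : Polynomial ℂ} (h : g.eval c ≠ 0) :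
    IsCoprime (X - C c) g := by
  refine ⟨-(C (g.eval c)⁻¹) * (g /ₘ (X - C c)), C (g.eval c)⁻¹, ?_⟩
  have h1 : g %ₘ (X - C c) + (X - C c) * (g /ₘ (X - C c)) = g :=
    modByMonic_add_div g (X - C c)
  rw [modByMonic_X_sub_C_eq_C_eval] at h1
  have h2 : C (g.eval c)⁻¹ * C (g.eval c) = 1 := by
    rw [← C_mul, inv_mul_cancel₀ h, C_1]
  linear_combination (-(C (g.eval c)⁻¹)) * h1 + h2

open Polynomial in
/-- A product of linear factors over a multiset is coprime to any `g` not vanishing on it. -/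
lemma multiset_lin_coprime {m : Multiset ℂ} {g : Polynomial ℂ} (h : ∀ c ∈ m, g.eval c ≠ 0) :
    IsCoprime ((m.map fun c => X - C c).prod) g := by
  induction m using Multiset.induction_on with
  | empty => simpa using isCoprime_one_left
  | cons c m ih =>
    rw [Multiset.map_cons, Multiset.prod_cons]
    exact (lin_coprime (h c (Multiset.mem_cons_self c m))).mul_left
      (ih fun c' hc' => h c' (Multiset.mem_cons_of_mem hc'))

theorem stmt0 (q : Polynomial ℂ) (hdeg : 2 ≤ q.natDegree)
    (f : ℂ → ℂ) (hf : f = fun z => q.eval z)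
    (p : ℕ) (v : Fin p → ℂ) (hv_inj : Function.Injective v)
    (hv_range : Set.range v = {w : ℂ | ∃ c : ℂ, deriv f c = 0 ∧ f c = w}) :
    ∃ L : Fin p → ℂ → ℂ,
      (∀ j : Fin p, ∃ A B : Polynomial ℂ,
        (∀ z : ℂ, deriv f z ≠ 0 → B.eval z ≠ 0) ∧
        ∀ z : ℂ, L j z = A.eval z / B.eval z) ∧
      ∀ z x : ℂ, deriv f z ≠ 0 → x ≠ f z → (∀ j : Fin p, x ≠ v j) →
        ∑ᶠ y ∈ f ⁻¹' {x}, 1 / ((z - y) * (deriv f y) ^ 2) =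
          1 / (deriv f z * (f z - x)) + ∑ j : Fin p, L j z / (x - v j) := by
  classical
  open Polynomial in
  subst hf
  set d := q.natDegree with hd
  set Q := derivative q with hQdef
  have hderiv : ∀ w : ℂ, deriv (fun z => q.eval z) w = Q.eval w := fun w => Polynomial.deriv (p := q)
  simp only [hderiv] at hv_range
  -- basic facts about Q
  have hdpos : 0 < d := by omega
  have hQdeg' : Q.degree = (d - 1 : ℕ) := degree_derivative_eq q hdpos
  have hQ0 : Q ≠ 0 := by
    intro h
    rw [h, degree_zero] at hQdeg'
    exact (by simp at hQdeg')
  have hQdeg : Q.natDegree = d - 1 := natDegree_eq_of_degree_eq_some hQdeg'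
  -- the critical value correspondence
  have hcrit1 : ∀ j : Fin p, ∃ c : ℂ, Q.eval c = 0 ∧ q.eval c = v j := by
    intro j
    have : v j ∈ Set.range v := ⟨j, rfl⟩
    rw [hv_range] at this
    exact this
  have hcrit2 : ∀ c : ℂ, Q.eval c = 0 → ∃ j : Fin p, v j = q.eval c := by
    intro c hc
    have : q.eval c ∈ Set.range v := by rw [hv_range]; exact ⟨c, hc, rfl⟩
    exact this
  -- the multiset of critical points with value v j
  set r : Fin p → Multiset ℂ := fun j => Q.roots.filter (fun c => q.eval c = v j) with hr
  have hmem_r : ∀ j c, c ∈ r j ↔ c ∈ Q.roots ∧ q.eval c = v j := by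
    intro j c; simp [hr, Multiset.mem_filter]
  set s : Fin p → Polynomial ℂ := fun j => ((r j).map fun c => X - C c).prod with hs
  have hmon : ∀ j, (s j).Monic := fun j =>
    monic_multiset_prod_of_monic _ _ fun c _ => monic_X_sub_C c
  have hs0 : ∀ j, s j ≠ 0 := fun j => (hmon j).ne_zero
  have hsQ : ∀ j, s j ∣ Q := fun j =>
    (Multiset.prod_X_sub_C_dvd_iff_le_roots hQ0 (r j)).mpr (Multiset.filter_le _ _)
  choose t hst using hsQ
  have ht0 : ∀ j, t j ≠ 0 := by
    intro j h
    have := hst j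
    rw [h, mul_zero] at this
    exact hQ0 this
  have hcount_r : ∀ j c, c ∈ r j → (r j).count c = Q.rootMultiplicity c := by
    intro j c hc
    rw [hr]
    rw [Multiset.count_filter, if_pos ((hmem_r j c).mp hc).2, count_roots]
  -- coprimality of s j and t j
  have hteval : ∀ j, ∀ c ∈ r j, (t j).eval c ≠ 0 := by
    intro j c hc h
    have hdvd1 : (X - C c) ∣ t j := dvd_iff_isRoot.mpr h
    have hrep : Multiset.replicate ((r j).count c) c ≤ r j := Multiset.le_count_iff_replicate_le.mp le_rfl
    have hdvd2 : (X - C c) ^ ((r j).count c) ∣ s j := by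
      have := Multiset.prod_dvd_prod_of_le (Multiset.map_le_map (f := fun c => X - C c) hrep)
      rwa [Multiset.map_replicate, Multiset.prod_replicate] at this
    have hdvd3 : (X - C c) ^ ((r j).count c + 1) ∣ Q := by
      rw [pow_succ, hst j]
      exact mul_dvd_mul hdvd2 hdvd1
    have := (le_rootMultiplicity_iff hQ0).mpr hdvd3
    rw [hcount_r j c hc] at this
    omega
  have hcop : ∀ j, IsCoprime (s j) (t j) := fun j => multiset_lin_coprime (hteval j)
  -- Bezout inverses of t j mod s j, with degree control
  have hbez : ∀ j, ∃ n : Polynomial ℂ, n.degree < (s j).degree ∧ s j ∣ (n * t j - 1) := by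
    intro j
    obtain ⟨a, b, hab⟩ := hcop j
    refine ⟨b %ₘ s j, degree_modByMonic_lt b (hmon j), ?_⟩
    have hmod : b %ₘ s j = b - s j * (b /ₘ s j) :=
      eq_sub_of_add_eq (modByMonic_add_div b (s j))
    refine ⟨-(a) - (b /ₘ s j) * t j, ?_⟩
    rw [hmod]
    linear_combination hab
  choose n hndeg hsnt using hbez
  -- r j is nonempty, so s j has positive degree
  have hr_ne : ∀ j, ∃ c, c ∈ r j := by
    intro j
    obtain ⟨c, hc1, hc2⟩ := hcrit1 j
    exact ⟨c, (hmem_r j c).mpr ⟨(mem_roots hQ0).mpr hc1, hc2⟩⟩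
  have hs_card : ∀ j, (s j).natDegree = Multiset.card (r j) := by
    intro j
    have h1 : (((r j).map fun c => X - C c)).prod.natDegree
        = ((((r j).map fun c => X - C c)).map natDegree).sum :=
      natDegree_multiset_prod_of_monic _ (fun g hg => by
        obtain ⟨a, _, rfl⟩ := Multiset.mem_map.mp hg; exact monic_X_sub_C a)
    rw [hs]
    rw [h1, Multiset.map_map]
    simp [Function.comp_def]
  have hs_pos : ∀ j, 1 ≤ (s j).natDegree := by
    intro j
    obtain ⟨c, hc⟩ := hr_ne j
    rw [hs_card j]
    exact Multiset.card_pos_iff_exists_mem.mpr ⟨c, hc⟩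
  -- degree bookkeeping for t j and n j
  have hst_deg : ∀ j, (s j).natDegree + (t j).natDegree = d - 1 := by
    intro j
    rw [← natDegree_mul (hs0 j) (ht0 j), ← hst j, hQdeg]
  have hA_deg : ∀ j, (t j * n j).natDegree ≤ d - 2 := by
    intro j
    rcases eq_or_ne (n j) 0 with h0 | h0
    · rw [h0, mul_zero, natDegree_zero]; omega
    · have h1 : (n j).natDegree < (s j).natDegree :=
        natDegree_lt_natDegree h0 (hndeg j)
      have := natDegree_mul_le (p := t j) (q := n j)
      have := hst_deg j
      have := hs_pos j
      omega
  -- divisibility of q - C (v j) by s j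
  have hs_dvd_qv : ∀ j, s j ∣ q - C (v j) := by
    intro j
    have hq0 : q - C (v j) ≠ 0 := by
      intro h
      have : (q - C (v j)).natDegree = d := natDegree_sub_C
      rw [h, natDegree_zero] at this
      omega
    rw [Multiset.prod_X_sub_C_dvd_iff_le_roots hq0]
    rw [Multiset.le_iff_count]
    intro c
    by_cases hc : c ∈ r j
    · rw [hcount_r j c hc, count_roots]
      have hroot : (q - C (v j)).IsRoot c := by
        simp [IsRoot, ((hmem_r j c).mp hc).2]
      have hder : derivative (q - C (v j)) = Q := by
        rw [derivative_sub, derivative_C, sub_zero]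
      have := derivative_rootMultiplicity_of_root (p := q - C (v j)) (t := c) hroot
      rw [hder] at this
      rw [this]
      omega
    · rw [Multiset.count_eq_zero_of_notMem hc]
      omega
  -- the multiset partition of Q.roots
  have h_part : ∑ j : Fin p, r j = Q.roots := by
    ext c
    rw [Multiset.count_sum']
    by_cases hc : ∃ j0 : Fin p, q.eval c = v j0
    · obtain ⟨j0, hj0⟩ := hc
      have hiff : ∀ j : Fin p, (q.eval c = v j) ↔ (j = j0) := by
        intro j
        constructor
        · intro h; exact hv_inj (h.symm.trans hj0)
        · rintro rfl; exact hj0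
      calc ∑ j : Fin p, (r j).count c
          = ∑ j : Fin p, if j = j0 then Q.roots.count c else 0 := by
            refine Finset.sum_congr rfl fun j _ => ?_
            rw [hr]; rw [Multiset.count_filter]
            simp only [hiff j]
        _ = Q.roots.count c := by simp
    · push_neg at hc
      have h1 : ∀ j : Fin p, (r j).count c = 0 := by
        intro j
        rw [hr, Multiset.count_filter, if_neg (hc j)]
      have h2 : Q.roots.count c = 0 := by
        rw [Multiset.count_eq_zero]
        intro hmem
        obtain ⟨j, hj⟩ := hcrit2 c ((mem_roots hQ0).mp hmem)
        exact hc j hj.symm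
      simp [h1, h2]
  have hQcard : Multiset.card Q.roots = d - 1 := by
    rw [← hQdeg]
    exact splits_iff_card_roots.mp (IsAlgClosed.splits Q)
  have hcard_sum : ∑ j : Fin p, Multiset.card (r j) = d - 1 := by
    have hmap : ∀ sf : Finset (Fin p),
        Multiset.card (∑ j ∈ sf, r j) = ∑ j ∈ sf, Multiset.card (r j) := by
      intro sf
      induction sf using Finset.induction_on with
      | empty => simp
      | insert i sf hni ih => rw [Finset.sum_insert hni, Finset.sum_insert hni, Multiset.card_add, ih]
    rw [← hmap, h_part, hQcard]
  -- coprimality between the s j's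
  have hcop_ss : ∀ j k : Fin p, j ≠ k → IsCoprime (s j) (s k) := by
    intro j k hjk
    apply multiset_lin_coprime (m := r j)
    intro c hc
    show eval c (s k) ≠ 0
    have hsk : s k = ((r k).map fun c => X - C c).prod := rfl
    rw [hsk, eval_multiset_prod]
    apply Multiset.prod_ne_zero
    intro h0
    rw [Multiset.map_map, Multiset.mem_map] at h0
    obtain ⟨c', hc', hge⟩ := h0
    simp only [Function.comp_apply, eval_sub, eval_X, eval_C, sub_eq_zero] at hge
    have h1 := ((hmem_r j c).mp hc).2
    have h2 := ((hmem_r k c').mp hc').2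
    rw [← hge] at h2
    exact hjk (hv_inj (h1.symm.trans h2))
  -- the rational functions L j
  refine ⟨fun j z => ((t j * n j).eval z) / Q.eval z, ?_, ?_⟩
  · intro j
    refine ⟨t j * n j, Q, ?_, fun z => rfl⟩
    intro z hz
    rwa [hderiv z] at hz
  · intro z x hz hx hxv
    simp only at hx
    rw [hderiv z] at hz
    simp only [hderiv]
    have hxq : q.eval z ≠ x := Ne.symm hx
    have hbz : q.eval z - x ≠ 0 := sub_ne_zero.mpr hxq
    have hxncrit : ∀ c : ℂ, Q.eval c = 0 → q.eval c ≠ x := by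
      intro c hc h
      obtain ⟨j, hj⟩ := hcrit2 c hc
      exact hxv j (hj.trans h).symm
    have hvx : ∀ j, v j - x ≠ 0 := fun j => sub_ne_zero.mpr fun h => hxv j h.symm
    set b : Polynomial ℂ := q - C x with hbdef
    have hbnat : b.natDegree = d := natDegree_sub_C
    have hb0 : b ≠ 0 := fun h => by rw [h, natDegree_zero] at hbnat; omega
    have hbeval : ∀ w, b.eval w = q.eval w - x := by intro w; simp [hbdef]
    have hbroots : ∀ y, y ∈ b.roots ↔ q.eval y = x := by
      intro y
      rw [mem_roots hb0, IsRoot, hbeval, sub_eq_zero]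
    have hbder : derivative b = Q := by rw [hbdef, derivative_sub, derivative_C, sub_zero]
    have hnodup : b.roots.Nodup := by
      rw [Multiset.nodup_iff_count_le_one]
      intro y
      by_cases hy : y ∈ b.roots
      · by_contra hcnt
        push_neg at hcnt
        have h2 : 2 ≤ b.rootMultiplicity y := by rw [← count_roots]; omega
        have hroot : b.IsRoot y := (mem_roots hb0).mp hy
        have h3 := derivative_rootMultiplicity_of_root hroot
        rw [hbder] at h3
        have hQpos : 0 < Q.rootMultiplicity y := by omega
        have hQy : Q.eval y = 0 := (rootMultiplicity_pos hQ0).mp hQpos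
        exact hxncrit y hQy ((hbroots y).mp hy)
      · rw [Multiset.count_eq_zero_of_notMem hy]; omega
    set S : Finset ℂ := b.roots.toFinset with hSdef
    have hSval : S.val = b.roots := Multiset.dedup_eq_self.mpr hnodup
    have hmemS : ∀ y, y ∈ S ↔ q.eval y = x := by
      intro y; rw [← hbroots y, hSdef, Multiset.mem_toFinset]
    have hpre : (fun z => q.eval z) ⁻¹' {x} = ↑S := by
      ext y
      simp only [Set.mem_preimage, Set.mem_singleton_iff, Finset.coe_sort_coe, Finset.mem_coe]
      exact (hmemS y).symm
    have hQyS : ∀ y ∈ S, Q.eval y ≠ 0 := fun y hy h => hxncrit y h ((hmemS y).mp hy)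
    have hyz : ∀ y ∈ S, y ≠ z := by
      intro y hy h
      apply hxq
      rw [← h]
      exact (hmemS y).mp hy
    have hbyS : ∀ y ∈ S, b.eval y = 0 := by
      intro y hy
      rw [hbeval, sub_eq_zero]
      exact (hmemS y).mp hy
    -- the Lagrange-type building blocks
    set g : ℂ → Polynomial ℂ := fun y => b /ₘ (X - C y) with hgdef
    have hgy : ∀ y ∈ S, (X - C y) * g y = b := by
      intro y hy
      have h := X_sub_C_mul_divByMonic_eq_sub_modByMonic b y
      rw [modByMonic_X_sub_C_eq_C_eval, hbyS y hy, map_zero, sub_zero] at h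
      exact h
    have hgz : ∀ y ∈ S, (z - y) * (g y).eval z = q.eval z - x := by
      intro y hy
      have h := congrArg (eval z) (hgy y hy)
      simpa [hbeval] using h
    have hgyy : ∀ y ∈ S, (g y).eval y = Q.eval y := by
      intro y hy
      have hder := congrArg derivative (hgy y hy)
      rw [hbder, derivative_mul, derivative_sub, derivative_X, derivative_C, sub_zero,
        one_mul] at hder
      have h := congrArg (eval y) hder
      simpa using h
    set T : ℂ → Polynomial ℂ := fun y => C (((Q.eval y) ^ 2)⁻¹) * (g y * Q) with hTdef
    set U : Fin p → Polynomial ℂ := fun j => C ((v j - x)⁻¹) * (b * (t j * n j)) with hUdef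
    set P : Polynomial ℂ := (∑ y ∈ S, T y) + (∑ j : Fin p, U j) - 1 with hPdef
    -- evaluations of the T-sum at the roots
    have hT1 : ∀ y0 ∈ S, (∑ y ∈ S, T y).eval y0 = 1 := by
      intro y0 hy0
      rw [eval_finset_sum]
      rw [Finset.sum_eq_single_of_mem y0 hy0 ?side]
      · simp only [hTdef, eval_mul, eval_C]
        rw [hgyy y0 hy0]
        have hQy := hQyS y0 hy0
        field_simp
      case side =>
        intro y hy hne
        simp only [hTdef, eval_mul, eval_C]
        have h0 : (g y).eval y0 = 0 := by
          have h := congrArg (eval y0) (hgy y hy)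
          rw [eval_mul, eval_sub, eval_X, eval_C, hbyS y0 hy0] at h
          exact (mul_eq_zero.mp h).resolve_left (sub_ne_zero.mpr (Ne.symm hne))
        rw [h0]
        ring
    -- b divides P
    have hbT : b ∣ ((∑ y ∈ S, T y) - 1) := by
      have hlc : b = C b.leadingCoeff * ∏ y ∈ S, (X - C y) := by
        have h1 := (IsAlgClosed.splits b).eq_prod_roots
        rw [Finset.prod_eq_multiset_prod, hSval]
        exact h1
      have hdvd_lin : ∀ y0 ∈ S, (X - C y0) ∣ ((∑ y ∈ S, T y) - 1) := by
        intro y0 hy0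
        rw [dvd_iff_isRoot]
        simp [IsRoot, hT1 y0 hy0]
      have hpair : (↑S : Set ℂ).Pairwise (Function.onFun IsCoprime fun y => (X - C y : Polynomial ℂ)) := by
        intro y1 _ y2 _ hne
        exact lin_coprime (by simp [sub_ne_zero.mpr hne])
      have hprodS : (∏ y ∈ S, (X - C y)) ∣ ((∑ y ∈ S, T y) - 1) :=
        Finset.prod_dvd_of_coprime hpair hdvd_lin
      obtain ⟨e, he⟩ := hprodS
      have hlc0 : b.leadingCoeff ≠ 0 := leadingCoeff_ne_zero.mpr hb0
      have hClc : C b.leadingCoeff * C (b.leadingCoeff)⁻¹ = 1 := by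
        rw [← C_mul, mul_inv_cancel₀ hlc0, C_1]
      refine ⟨C (b.leadingCoeff)⁻¹ * e, ?_⟩
      linear_combination he + (-(C (b.leadingCoeff)⁻¹) * e) * hlc
        + (-(∏ y ∈ S, (X - C y)) * e) * hClc
    have hbU : b ∣ (∑ j : Fin p, U j) :=
      Finset.dvd_sum fun j _ => ⟨C ((v j - x)⁻¹) * (t j * n j), by simp only [hUdef]; ring⟩
    have hbP : b ∣ P := by
      have hre : P = ((∑ y ∈ S, T y) - 1) + (∑ j : Fin p, U j) := by rw [hPdef]; ring
      rw [hre]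
      exact dvd_add hbT hbU
    -- each s j divides P
    have hsP : ∀ j, s j ∣ P := by
      intro j
      have hsT : s j ∣ (∑ y ∈ S, T y) :=
        Finset.dvd_sum fun y _ => ⟨C (((Q.eval y) ^ 2)⁻¹) * g y * t j, by
          simp only [hTdef]; rw [hst j]; ring⟩
      have hsU : ∀ k, k ≠ j → s j ∣ U k := by
        intro k hk
        have h1 : s j ∣ s k * t k := by rw [← hst k]; exact ⟨t j, hst j⟩
        have h2 : s j ∣ t k := (hcop_ss j k (Ne.symm hk)).dvd_of_dvd_mul_left h1
        obtain ⟨e, he⟩ := h2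
        exact ⟨C ((v k - x)⁻¹) * (b * (e * n k)), by simp only [hUdef]; rw [he]; ring⟩
      have hsU1 : s j ∣ (U j - 1) := by
        obtain ⟨α, hα⟩ := hs_dvd_qv j
        obtain ⟨β, hβ⟩ := hsnt j
        have hCw : C ((v j - x)⁻¹) * C (v j - x) = 1 := by
          rw [← C_mul, inv_mul_cancel₀ (hvx j), C_1]
        have hqx : b = s j * α + C (v j - x) := by
          rw [hbdef, C_sub]
          linear_combination hα
        refine ⟨C ((v j - x)⁻¹) * α * (t j * n j) + β, ?_⟩
        simp only [hUdef]
        rw [hqx]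
        linear_combination hβ + (t j * n j) * hCw
      have hsplit : (∑ k : Fin p, U k) = U j + ∑ k ∈ Finset.univ.erase j, U k :=
        (Finset.add_sum_erase _ _ (Finset.mem_univ j)).symm
      have hre : P = (∑ y ∈ S, T y) + ((U j - 1) + ∑ k ∈ Finset.univ.erase j, U k) := by
        rw [hPdef, hsplit]; ring
      rw [hre]
      exact dvd_add hsT (dvd_add hsU1
        (Finset.dvd_sum fun k hk => hsU k (Finset.mem_erase.mp hk).1))
    have hprod_dvd : (∏ j : Fin p, s j) ∣ P :=
      Fintype.prod_dvd_of_coprime (fun j k hjk => hcop_ss j k hjk) hsP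
    have hbcop : IsCoprime b (∏ j : Fin p, s j) := by
      apply IsCoprime.prod_right
      intro j _
      apply (multiset_lin_coprime (m := r j) (g := b) ?_).symm
      intro c hc
      rw [hbeval, ((hmem_r j c).mp hc).2]
      exact hvx j
    have hD_dvd : b * (∏ j : Fin p, s j) ∣ P := hbcop.mul_dvd hbP hprod_dvd
    -- degree bounds
    have hprod_monic : (∏ j : Fin p, s j).Monic := monic_prod_of_monic _ _ fun j _ => hmon j
    have hprod_nat : (∏ j : Fin p, s j).natDegree = d - 1 := by
      rw [natDegree_prod _ _ (fun j _ => hs0 j)]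
      rw [Finset.sum_congr rfl (fun j _ => hs_card j)]
      exact hcard_sum
    have hD0 : b * (∏ j : Fin p, s j) ≠ 0 := mul_ne_zero hb0 hprod_monic.ne_zero
    have hDnat : (b * (∏ j : Fin p, s j)).natDegree = d + (d - 1) := by
      rw [natDegree_mul hb0 hprod_monic.ne_zero, hbnat, hprod_nat]
    have hTdeg : ∀ y ∈ S, (T y).natDegree ≤ 2 * d - 2 := by
      intro y _
      have h1 := natDegree_mul_le (p := C (((Q.eval y) ^ 2)⁻¹)) (q := g y * Q)
      have h2 := natDegree_mul_le (p := g y) (q := Q)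
      have h3 : (g y).natDegree = d - 1 := by
        rw [hgdef]
        rw [natDegree_divByMonic b (monic_X_sub_C y), natDegree_X_sub_C, hbnat]
      rw [natDegree_C] at h1
      simp only [hTdef]
      omega
    have hUdeg : ∀ j, (U j).natDegree ≤ 2 * d - 2 := by
      intro j
      have h1 := natDegree_mul_le (p := C ((v j - x)⁻¹)) (q := b * (t j * n j))
      have h2 := natDegree_mul_le (p := b) (q := t j * n j)
      have h3 := hA_deg j
      rw [natDegree_C] at h1
      simp only [hUdef]
      omega
    have hPnat : P.natDegree ≤ 2 * d - 2 := by
      have h1 : (∑ y ∈ S, T y).natDegree ≤ 2 * d - 2 :=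
        natDegree_sum_le_of_forall_le S T hTdeg
      have h2 : (∑ j : Fin p, U j).natDegree ≤ 2 * d - 2 :=
        natDegree_sum_le_of_forall_le Finset.univ U fun j _ => hUdeg j
      have h3 := natDegree_add_le (∑ y ∈ S, T y) (∑ j : Fin p, U j)
      have h4 := natDegree_sub_le ((∑ y ∈ S, T y) + (∑ j : Fin p, U j)) 1
      rw [hPdef]
      simp only [natDegree_one] at h4
      omega
    -- conclude the polynomial identity
    have hP0 : P = 0 := by
      by_contra hP
      have hlt : P.natDegree < (b * (∏ j : Fin p, s j)).natDegree := by
        rw [hDnat]; omega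
      have hdlt : P.degree < (b * (∏ j : Fin p, s j)).degree := by
        rw [degree_eq_natDegree hP, degree_eq_natDegree hD0]
        exact_mod_cast hlt
      exact hP (eq_zero_of_dvd_of_degree_lt hD_dvd hdlt)
    have hsum : (∑ y ∈ S, T y) + (∑ j : Fin p, U j) = 1 := by
      have h1 : (∑ y ∈ S, T y) + (∑ j : Fin p, U j) - 1 = 0 := by rw [← hPdef]; exact hP0
      linear_combination h1
    -- evaluate at z
    have hz1 : (∑ y ∈ S, (T y).eval z) + (∑ j : Fin p, (U j).eval z) = 1 := by
      have h := congrArg (eval z) hsum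
      simpa [eval_finset_sum] using h
    have hTz : ∀ y ∈ S, (T y).eval z
        = (q.eval z - x) * Q.eval z * (1 / ((z - y) * (Q.eval y) ^ 2)) := by
      intro y hy
      have hzy : z - y ≠ 0 := sub_ne_zero.mpr fun h => (hyz y hy) h.symm
      have hgzy := hgz y hy
      have hQy := hQyS y hy
      simp only [hTdef, eval_mul, eval_C]
      have hgeval : (g y).eval z = (q.eval z - x) / (z - y) := by
        rw [eq_div_iff hzy]
        linear_combination hgzy
      rw [hgeval]
      field_simp
    have hUz : ∀ j, (U j).eval z = (v j - x)⁻¹ * ((q.eval z - x) * (t j * n j).eval z) := by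
      intro j
      simp [hUdef, hbeval]
    rw [Finset.sum_congr rfl hTz, ← Finset.mul_sum,
      Finset.sum_congr rfl (fun j _ => hUz j)] at hz1
    -- rewrite the goal
    rw [hpre, finsum_mem_coe_finset]
    have hB : Q.eval z ≠ 0 := hz
    have hAB : (q.eval z - x) * Q.eval z ≠ 0 := mul_ne_zero hbz hB
    have e1 : 1 / (Q.eval z * (q.eval z - x)) * ((q.eval z - x) * Q.eval z) = 1 := by
      field_simp
    have e2 : ∀ j : Fin p, ((t j * n j).eval z / Q.eval z / (x - v j))
        * ((q.eval z - x) * Q.eval z)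
        = -((v j - x)⁻¹ * ((q.eval z - x) * (t j * n j).eval z)) := by
      intro j
      have hxv2 : x - v j ≠ 0 := sub_ne_zero.mpr (hxv j)
      have hinv : (v j - x)⁻¹ = -(x - v j)⁻¹ := by
        rw [← neg_sub x (v j), inv_neg]
      rw [hinv]
      field_simp
    refine mul_right_cancel₀ hAB ?_
    rw [add_mul, e1]
    conv_rhs => rw [Finset.sum_mul]
    rw [Finset.sum_congr rfl (fun j _ => e2 j), Finset.sum_neg_distrib]
    linear_combination hz1

end
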